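/- For two coalescing random walks on the complete bipartite graph K_{n,m} (m ≥ 2), the substochastic transition matrix on the three non-coalesced configurations (both walkers in L at distinct vertices; both in S at distinct vertices; one in each part) has largest eigenvalue λ_CRW(K_{n,m}) = 1 - (2/(n+m))(1 - √(1 - 1/(2n) - 1/(2m))). -/

import Mathlib

open Matrix

/-- The substochastic transition matrix for two coalescing lazy random walks on the
complete bipartite graph `K_{n,m}`, restricted to the three non-coalesced configurations:
state 0 = both walkers in `L` at distinct vertices, state 1 = both in `S` at distinct
vertices, state 2 = one walker in each part. -/
noncomputable def crwBipartiteMatrix (n m : ℕ) : Matrix (Fin 3) (Fin 3) ℝ :=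
  !![((n : ℝ) + m - 2) / ((n : ℝ) + m), 0, 2 / ((n : ℝ) + m);
     0, ((n : ℝ) + m - 2) / ((n : ℝ) + m), 2 / ((n : ℝ) + m);
     ((n : ℝ) - 1) / ((n : ℝ) * ((n : ℝ) + m)), ((m : ℝ) - 1) / ((m : ℝ) * ((n : ℝ) + m)),
       ((n : ℝ) + m - 2) / ((n : ℝ) + m)]

lemma crw_det_factor (n m : ℕ) (c : ℝ) :
    det (crwBipartiteMatrix n m - c • 1)
      = (((n : ℝ) + m - 2) / ((n : ℝ) + m) - c) *
        ((((n : ℝ) + m - 2) / ((n : ℝ) + m) - c)^2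
          - 2 / ((n : ℝ) + m) * (((n : ℝ) - 1) / ((n : ℝ) * ((n : ℝ) + m))
              + ((m : ℝ) - 1) / ((m : ℝ) * ((n : ℝ) + m)))) := by
  have hmat : crwBipartiteMatrix n m - c • 1
      = !![((n : ℝ) + m - 2) / ((n : ℝ) + m) - c, 0, 2 / ((n : ℝ) + m);
           0, ((n : ℝ) + m - 2) / ((n : ℝ) + m) - c, 2 / ((n : ℝ) + m);
           ((n : ℝ) - 1) / ((n : ℝ) * ((n : ℝ) + m)), ((m : ℝ) - 1) / ((m : ℝ) * ((n : ℝ) + m)),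
             ((n : ℝ) + m - 2) / ((n : ℝ) + m) - c] := by
    ext i j
    fin_cases i <;> fin_cases j <;> simp [crwBipartiteMatrix, Matrix.one_apply]
  rw [hmat, det_fin_three]
  simp [Matrix.vecHead, Matrix.vecTail]
  norm_num
  ring

lemma crw_det_factor_complex (n m : ℕ) (z : ℂ) :
    det ((crwBipartiteMatrix n m).map (Complex.ofReal ·) - z • 1)
      = ((((n : ℝ) + m - 2) / ((n : ℝ) + m) : ℝ) - z) *
        (((((n : ℝ) + m - 2) / ((n : ℝ) + m) : ℝ) - z)^2
          - ((2 / ((n : ℝ) + m) * (((n : ℝ) - 1) / ((n : ℝ) * ((n : ℝ) + m))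
              + ((m : ℝ) - 1) / ((m : ℝ) * ((n : ℝ) + m))) : ℝ) : ℂ)) := by
  have hmat : (crwBipartiteMatrix n m).map (Complex.ofReal ·) - z • 1
      = !![((((n : ℝ) + m - 2) / ((n : ℝ) + m) : ℝ) : ℂ) - z, 0, ((2 / ((n : ℝ) + m) : ℝ) : ℂ);
           0, ((((n : ℝ) + m - 2) / ((n : ℝ) + m) : ℝ) : ℂ) - z, ((2 / ((n : ℝ) + m) : ℝ) : ℂ);
           ((((n : ℝ) - 1) / ((n : ℝ) * ((n : ℝ) + m)) : ℝ) : ℂ),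
             ((((m : ℝ) - 1) / ((m : ℝ) * ((n : ℝ) + m)) : ℝ) : ℂ),
             ((((n : ℝ) + m - 2) / ((n : ℝ) + m) : ℝ) : ℂ) - z] := by
    ext i j
    fin_cases i <;> fin_cases j <;> simp [crwBipartiteMatrix, Matrix.one_apply]
  rw [hmat, det_fin_three]
  simp [Matrix.vecHead, Matrix.vecTail]
  norm_num
  ring

/-- The largest eigenvalue of the substochastic matrix for two coalescing random walks on
`K_{n,m}` (`2 ≤ m ≤ n`) is `λ_CRW(K_{n,m}) = 1 - (2/(n+m))(1 - √(1 - 1/(2n) - 1/(2m)))`: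
it is an eigenvalue, and every (complex) eigenvalue has modulus at most this value. -/
theorem crw_bipartite_largest_eigenvalue (n m : ℕ) (hm : 2 ≤ m) (hmn : m ≤ n) :
    det (crwBipartiteMatrix n m
        - (1 - (2 / ((n : ℝ) + m)) * (1 - Real.sqrt (1 - 1 / (2 * n) - 1 / (2 * m)))) • 1)
      = 0 ∧
    ∀ z : ℂ, det ((crwBipartiteMatrix n m).map (Complex.ofReal ·) - z • 1) = 0 →
      ‖z‖
        ≤ 1 - (2 / ((n : ℝ) + m)) * (1 - Real.sqrt (1 - 1 / (2 * n) - 1 / (2 * m))) := by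
  have hM : (2:ℝ) ≤ m := by exact_mod_cast hm
  have hN : (2:ℝ) ≤ n := by exact_mod_cast hm.trans hmn
  have hN0 : (0:ℝ) < n := by linarith
  have hM0 : (0:ℝ) < m := by linarith
  have hNM : (0:ℝ) < (n:ℝ) + m := by linarith
  have hNM4 : (4:ℝ) ≤ (n:ℝ) + m := by linarith
  have hrad : (0:ℝ) ≤ 1 - 1/(2*(n:ℝ)) - 1/(2*(m:ℝ)) := by
    have h1 : 1/(2*(n:ℝ)) ≤ 1/4 := by rw [div_le_div_iff₀ (by linarith) (by norm_num)]; linarith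
    have h2 : 1/(2*(m:ℝ)) ≤ 1/4 := by rw [div_le_div_iff₀ (by linarith) (by norm_num)]; linarith
    linarith
  set s := Real.sqrt (1 - 1/(2*(n:ℝ)) - 1/(2*(m:ℝ))) with hs
  have hs0 : 0 ≤ s := Real.sqrt_nonneg _
  have hs2 : s^2 = 1 - 1/(2*(n:ℝ)) - 1/(2*(m:ℝ)) := Real.sq_sqrt hrad
  have hs1 : s ≤ 1 := by
    have h1 : 0 < 1/(2*(n:ℝ)) := by positivity
    have h2 : 0 < 1/(2*(m:ℝ)) := by positivity
    nlinarith [hs2, hs0]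
  set a : ℝ := ((n : ℝ) + m - 2) / ((n : ℝ) + m) with ha
  set r : ℝ := 2 * s / ((n : ℝ) + m) with hrr
  have hr0 : 0 ≤ r := by positivity
  have ha0 : 0 ≤ a := by
    rw [ha]; apply div_nonneg <;> linarith
  have har : 0 ≤ a - r := by
    rw [ha, hrr]
    rw [sub_nonneg, div_le_div_iff₀ hNM hNM]
    nlinarith
  have hlam : 1 - (2 / ((n : ℝ) + m)) * (1 - s) = a + r := by
    rw [ha, hrr]; field_simp; ring
  have hB : 2 / ((n : ℝ) + m) * (((n : ℝ) - 1) / ((n : ℝ) * ((n : ℝ) + m))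
      + ((m : ℝ) - 1) / ((m : ℝ) * ((n : ℝ) + m))) = r ^ 2 := by
    rw [hrr, div_pow, mul_pow, hs2]
    field_simp
    ring
  constructor
  · rw [crw_det_factor, hlam, hB, ← ha]
    have : (a - (a + r))^2 = r^2 := by ring
    rw [this]
    ring
  · intro z hz
    rw [crw_det_factor_complex] at hz
    rw [hB] at hz
    rw [← ha] at hz
    have hz' : ((a : ℂ) - z) * (((a : ℂ) - z - r) * ((a : ℂ) - z + r)) = 0 := by
      rw [← hz]; push_cast; ring
    rw [hlam]
    rcases mul_eq_zero.1 hz' with h | h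
    · have : z = (a : ℂ) := by linear_combination -h
      rw [this, Complex.norm_real, Real.norm_eq_abs, abs_of_nonneg ha0]
      linarith
    · rcases mul_eq_zero.1 h with h | h
      · have : z = ((a - r : ℝ) : ℂ) := by push_cast; linear_combination -h
        rw [this, Complex.norm_real, Real.norm_eq_abs, abs_of_nonneg har]
        linarith
      · have : z = ((a + r : ℝ) : ℂ) := by push_cast; linear_combination -h
        rw [this, Complex.norm_real, Real.norm_eq_abs, abs_of_nonneg (by linarith)]
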